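/- Define P : ℝ × ℝ → ℝ by P(Z,T) := ∑_{m=0}^∞ (2/M_m)·sin(M_m·Z)·exp(−M_m²·T), where M_m := (π/2)·(2·m + 1). Then for every T > 0 and every Z ∈ ℝ, the series converges, P is differentiable in T at (Z,T), the map Z ↦ P(Z,T) is twice differentiable at Z, and ∂P/∂T (Z,T) = ∂²P/∂Z² (Z,T). -/

import Mathlib

open Real

/-- `M_m = (π/2)(2m+1)`. -/
noncomputable def terzaghiM (m : ℕ) : ℝ := π / 2 * (2 * (m : ℝ) + 1)

/-- Terzaghi consolidation solution
`P(Z,T) = ∑ (2/M_m) sin(M_m Z) exp(−M_m² T)`. -/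
noncomputable def terzaghiP (p : ℝ × ℝ) : ℝ :=
  ∑' m : ℕ, 2 / terzaghiM m * Real.sin (terzaghiM m * p.1) * Real.exp (-(terzaghiM m) ^ 2 * p.2)

open Set

lemma terzaghiM_ge (m : ℕ) : (m : ℝ) + 1 ≤ terzaghiM m := by
  have h := Real.pi_gt_three
  unfold terzaghiM; nlinarith [(Nat.cast_nonneg m : (0:ℝ) ≤ m)]

lemma terzaghiM_pos (m : ℕ) : 0 < terzaghiM m := by
  have : (0:ℝ) ≤ m := Nat.cast_nonneg m; linarith [terzaghiM_ge m]

lemma terzaghiM_one_le (m : ℕ) : 1 ≤ terzaghiM m := by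
  have : (0:ℝ) ≤ m := Nat.cast_nonneg m; linarith [terzaghiM_ge m]

lemma terzaghiM_le (m : ℕ) : terzaghiM m ≤ 4 * ((m : ℝ) + 1) := by
  have h := Real.pi_le_four
  unfold terzaghiM; nlinarith [(Nat.cast_nonneg m : (0:ℝ) ≤ m)]

lemma terzaghi_summable_bound (k : ℕ) {c : ℝ} (hc : 0 < c) :
    Summable (fun m : ℕ => terzaghiM m ^ k * Real.exp (-(terzaghiM m) ^ 2 * c)) := by
  set r : ℝ := Real.exp (-c) with hr
  have hr0 : 0 < r := Real.exp_pos _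
  have hr1 : ‖r‖ < 1 := by
    rw [Real.norm_eq_abs, abs_of_pos hr0]
    exact Real.exp_lt_one_iff.2 (by linarith)
  have h1 : Summable (fun n : ℕ => (n : ℝ) ^ k * r ^ n) :=
    summable_pow_mul_geometric_of_norm_lt_one k hr1
  have h2 : Summable (fun n : ℕ => ((n : ℝ) + 1) ^ k * r ^ (n + 1)) := by
    have := (summable_nat_add_iff 1).2 h1
    simpa [Nat.cast_add] using this
  have h3 : Summable (fun n : ℕ => 4 ^ k / r * (((n : ℝ) + 1) ^ k * r ^ (n + 1))) :=
    h2.mul_left _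
  refine h3.of_nonneg_of_le (fun m => ?_) (fun m => ?_)
  · exact mul_nonneg (pow_nonneg (terzaghiM_pos m).le _) (Real.exp_pos _).le
  · have hMpos := terzaghiM_pos m
    have hMk : terzaghiM m ^ k ≤ (4 * ((m:ℝ)+1)) ^ k :=
      pow_le_pow_left₀ hMpos.le (terzaghiM_le m) k
    have hM2 : (m : ℝ) ≤ terzaghiM m ^ 2 := by
      have h := terzaghiM_ge m
      nlinarith [(Nat.cast_nonneg m : (0:ℝ) ≤ m)]
    have hexp : Real.exp (-(terzaghiM m) ^ 2 * c) ≤ r ^ m := by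
      rw [hr, ← Real.exp_nat_mul]
      exact Real.exp_le_exp.2 (by nlinarith [hM2, hc])
    calc terzaghiM m ^ k * Real.exp (-(terzaghiM m) ^ 2 * c)
        ≤ (4 * ((m:ℝ)+1)) ^ k * r ^ m := by
          apply mul_le_mul hMk hexp (Real.exp_pos _).le (by positivity)
      _ = 4 ^ k / r * (((m : ℝ) + 1) ^ k * r ^ (m + 1)) := by
          rw [mul_pow, pow_succ, div_mul_eq_mul_div, eq_div_iff hr0.ne']; ring

lemma terzaghi_abs_bound {a s e C : ℝ} (ha : |a| ≤ C) (hs : |s| ≤ 1) (he : 0 ≤ e) :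
    ‖a * s * e‖ ≤ C * e := by
  rw [Real.norm_eq_abs, abs_mul, abs_mul, abs_of_nonneg he]
  have h1 : |a| * |s| ≤ C * 1 := mul_le_mul ha hs (abs_nonneg _) ((abs_nonneg a).trans ha)
  nlinarith [abs_nonneg s, abs_nonneg a]

/-- For `T > 0` the Terzaghi series converges, is differentiable in `T`, twice
differentiable in `Z`, and satisfies the heat equation `∂P/∂T = ∂²P/∂Z²`. -/
theorem terzaghi_heat_equation (Z T : ℝ) (hT : 0 < T) :
    Summable (fun m : ℕ =>
        2 / terzaghiM m * Real.sin (terzaghiM m * Z) * Real.exp (-(terzaghiM m) ^ 2 * T)) ∧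
    DifferentiableAt ℝ (fun τ => terzaghiP (Z, τ)) T ∧
    DifferentiableAt ℝ (fun z => terzaghiP (z, T)) Z ∧
    DifferentiableAt ℝ (deriv fun z => terzaghiP (z, T)) Z ∧
    deriv (fun τ => terzaghiP (Z, τ)) T = deriv (deriv fun z => terzaghiP (z, T)) Z := by
  have hMpos := terzaghiM_pos
  have hMne : ∀ m, terzaghiM m ≠ 0 := fun m => (hMpos m).ne'
  set M := terzaghiM with hMdef
  set F : ℕ → ℝ → ℝ := fun m z => 2 / M m * Real.sin (M m * z) * Real.exp (-(M m) ^ 2 * T)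
    with hF
  set F' : ℕ → ℝ → ℝ := fun m z => 2 * Real.cos (M m * z) * Real.exp (-(M m) ^ 2 * T) with hF'
  set F'' : ℕ → ℝ → ℝ := fun m z => -2 * M m * Real.sin (M m * z) * Real.exp (-(M m) ^ 2 * T)
    with hF''
  set G : ℕ → ℝ → ℝ := fun m τ => 2 / M m * Real.sin (M m * Z) * Real.exp (-(M m) ^ 2 * τ)
    with hG
  set G' : ℕ → ℝ → ℝ := fun m τ => -2 * M m * Real.sin (M m * Z) * Real.exp (-(M m) ^ 2 * τ)
    with hG'
  -- summable majorants
  have hu0 : Summable (fun m : ℕ => 2 * Real.exp (-(M m) ^ 2 * T)) := by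
    have := (terzaghi_summable_bound 0 hT).mul_left 2
    simpa using this
  have hu1 : Summable (fun m : ℕ => 2 * M m * Real.exp (-(M m) ^ 2 * T)) :=
    ((terzaghi_summable_bound 1 hT).mul_left 2).congr
      (fun m => by rw [pow_one, ← mul_assoc])
  have hu2 : Summable (fun m : ℕ => 2 * M m * Real.exp (-(M m) ^ 2 * (T / 2))) :=
    ((terzaghi_summable_bound 1 (by linarith : (0:ℝ) < T / 2)).mul_left 2).congr
      (fun m => by rw [pow_one, ← mul_assoc])
  -- pointwise derivatives
  have hFd : ∀ m z, HasDerivAt (F m) (F' m z) z := by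
    intro m z
    have h1 : HasDerivAt (fun z => Real.sin (M m * z)) (Real.cos (M m * z) * (M m * 1)) z :=
      ((hasDerivAt_id z).const_mul (M m)).sin
    have h2 := (h1.const_mul (2 / M m)).mul_const (Real.exp (-(M m) ^ 2 * T))
    refine HasDerivAt.congr_deriv h2 ?_
    rw [hF']
    field_simp [hMne m]
  have hF'd : ∀ m z, HasDerivAt (F' m) (F'' m z) z := by
    intro m z
    have h1 : HasDerivAt (fun z => Real.cos (M m * z)) (-Real.sin (M m * z) * (M m * 1)) z :=
      ((hasDerivAt_id z).const_mul (M m)).cos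
    have h2 := (h1.const_mul 2).mul_const (Real.exp (-(M m) ^ 2 * T))
    refine HasDerivAt.congr_deriv h2 ?_
    rw [hF'']
    ring
  have hGd : ∀ m τ, HasDerivAt (G m) (G' m τ) τ := by
    intro m τ
    have h1 : HasDerivAt (fun τ : ℝ => Real.exp (-(M m) ^ 2 * τ))
        (Real.exp (-(M m) ^ 2 * τ) * (-(M m) ^ 2 * 1)) τ :=
      ((hasDerivAt_id τ).const_mul (-(M m) ^ 2)).exp
    have h2 := h1.const_mul (2 / M m * Real.sin (M m * Z))
    refine HasDerivAt.congr_deriv h2 ?_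
    rw [hG']
    field_simp [hMne m]
  -- norm bounds
  have hFb : ∀ m z, ‖F m z‖ ≤ 2 * Real.exp (-(M m) ^ 2 * T) := by
    intro m z
    refine terzaghi_abs_bound ?_ (Real.abs_sin_le_one _) (Real.exp_pos _).le
    rw [abs_div, abs_of_nonneg (by norm_num : (0:ℝ) ≤ 2), abs_of_pos (hMpos m)]
    exact div_le_self (by norm_num) (terzaghiM_one_le m)
  have hF'b : ∀ m z, ‖F' m z‖ ≤ 2 * Real.exp (-(M m) ^ 2 * T) := by
    intro m z
    exact terzaghi_abs_bound (by norm_num) (Real.abs_cos_le_one _) (Real.exp_pos _).le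
  have hF''b : ∀ m z, ‖F'' m z‖ ≤ 2 * M m * Real.exp (-(M m) ^ 2 * T) := by
    intro m z
    refine terzaghi_abs_bound ?_ (Real.abs_sin_le_one _) (Real.exp_pos _).le
    rw [abs_mul, abs_of_nonneg ((hMpos m).le), abs_of_nonpos (by norm_num : (-2:ℝ) ≤ 0)]
    norm_num
  have hG'b : ∀ m τ, τ ∈ Ioi (T / 2) → ‖G' m τ‖ ≤ 2 * M m * Real.exp (-(M m) ^ 2 * (T / 2)) := by
    intro m τ hτ
    have h1 : ‖G' m τ‖ ≤ 2 * M m * Real.exp (-(M m) ^ 2 * τ) := by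
      refine terzaghi_abs_bound ?_ (Real.abs_sin_le_one _) (Real.exp_pos _).le
      rw [abs_mul, abs_of_nonneg ((hMpos m).le), abs_of_nonpos (by norm_num : (-2:ℝ) ≤ 0)]
      norm_num
    refine h1.trans (mul_le_mul_of_nonneg_left ?_ (by nlinarith [hMpos m]))
    apply Real.exp_le_exp.2
    have : T / 2 ≤ τ := le_of_lt hτ
    nlinarith [sq_nonneg (M m), hMpos m]
  -- summability of the series at base points
  have hsumF : ∀ z, Summable (fun m => F m z) := fun z =>
    Summable.of_norm_bounded hu0 (fun m => hFb m z)
  have hsumF' : Summable (fun m => F' m 0) :=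
    Summable.of_norm_bounded hu0 (fun m => hF'b m 0)
  -- the three key derivative statements
  have key1 : HasDerivAt (fun z => ∑' m, F m z) (∑' m, F' m Z) Z :=
    hasDerivAt_tsum hu0 hFd (fun m z => hF'b m z) (hsumF 0) Z
  have key2 : HasDerivAt (fun z => ∑' m, F' m z) (∑' m, F'' m Z) Z :=
    hasDerivAt_tsum hu1 hF'd (fun m z => hF''b m z) hsumF' Z
  have hTmem : T ∈ Ioi (T / 2) := by simp; linarith
  have hGsum : Summable (fun m => G m T) := hsumF Z
  have keyT : HasDerivAt (fun τ => ∑' m, G m τ) (∑' m, G' m T) T :=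
    hasDerivAt_tsum_of_isPreconnected hu2 isOpen_Ioi isPreconnected_Ioi
      (fun m τ _ => hGd m τ) hG'b hTmem hGsum hTmem
  -- identify `terzaghiP` with the series
  have ePz : (fun z => terzaghiP (z, T)) = fun z => ∑' m, F m z := rfl
  have ePτ : (fun τ => terzaghiP (Z, τ)) = fun τ => ∑' m, G m τ := rfl
  have hderiv_eq : (deriv fun z => ∑' m, F m z) = fun z => ∑' m, F' m z := by
    have h := deriv_tsum hu0 (fun m z => (hFd m z).differentiableAt)
      (fun m y => by rw [(hFd m y).deriv]; exact hF'b m y) (hsumF 0)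
    rw [h]
    funext y
    exact tsum_congr fun m => (hFd m y).deriv
  refine ⟨hsumF Z, ?_, ?_, ?_, ?_⟩
  · rw [ePτ]; exact keyT.differentiableAt
  · rw [ePz]; exact key1.differentiableAt
  · rw [ePz, hderiv_eq]; exact key2.differentiableAt
  · rw [ePτ, ePz, hderiv_eq, keyT.deriv, key2.deriv]
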